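/- Define P(x) = (-80π²+320π-320)x⁶ + (240π³-992π²+1088π-128)x⁵ + (-260π⁴+1216π³-1344π²-576π+960)x⁴ + (120π⁵-728π⁴+720π³+1472π²-1920π)x³ + (-20π⁶+212π⁵-132π⁴-1184π³+1440π²)x² + (-24π⁶-16π⁵+408π⁴-480π³)x + 11π⁶-52π⁵+60π⁴. Then P(x) > 0 for all x in (0, 23/100). -/

import Mathlib

/-! Each coefficient of `P` is a polynomial in `π`, hence linear in the powers `π ^ k`, and the
twenty-digit enclosure of `π` bounds it from below by an integer with a margin of at least `0.18`.
With these integer coefficients the sextic is still at least about `256` on `[0, 0.23]` (its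
minimum is near `x = 0.166`), which `nlinarith` certifies
from a few squares. -/

open Real

lemma pi_pow_bounds (n : ℕ) (hn : n ≠ 0) :
    (3.14159265358979323846 : ℝ) ^ n < π ^ n ∧ π ^ n < (3.14159265358979323847 : ℝ) ^ n :=
  ⟨pow_lt_pow_left₀ pi_gt_d20 (by norm_num) hn, pow_lt_pow_left₀ pi_lt_d20 pi_pos.le hn⟩

lemma pi_sextic_coeffs_ge :
    -80 * π ^ 2 + 320 * π - 320 ≥ -105 ∧
    240 * π ^ 3 - 992 * π ^ 2 + 1088 * π - 128 ≥ 940 ∧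
    -260 * π ^ 4 + 1216 * π ^ 3 - 1344 * π ^ 2 - 576 * π + 960 ≥ -1738 ∧
    120 * π ^ 5 - 728 * π ^ 4 + 720 * π ^ 3 + 1472 * π ^ 2 - 1920 * π ≥ -3371 ∧
    -20 * π ^ 6 + 212 * π ^ 5 - 132 * π ^ 4 - 1184 * π ^ 3 + 1440 * π ^ 2 ≥ 10291 ∧
    -24 * π ^ 6 - 16 * π ^ 5 + 408 * π ^ 4 - 480 * π ^ 3 ≥ -3110 ∧
    11 * π ^ 6 - 52 * π ^ 5 + 60 * π ^ 4 ≥ 506 := by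
  have h1 := pi_gt_d20
  have h1' := pi_lt_d20
  obtain ⟨h2, h2'⟩ := pi_pow_bounds 2 (by norm_num)
  obtain ⟨h3, h3'⟩ := pi_pow_bounds 3 (by norm_num)
  obtain ⟨h4, h4'⟩ := pi_pow_bounds 4 (by norm_num)
  obtain ⟨h5, h5'⟩ := pi_pow_bounds 5 (by norm_num)
  obtain ⟨h6, h6'⟩ := pi_pow_bounds 6 (by norm_num)
  refine ⟨?_, ?_, ?_, ?_, ?_, ?_, ?_⟩ <;> linarith

lemma integer_sextic_pos (x : ℝ) (hx : 0 < x) (hx' : x < 23 / 100) :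
    -105 * x ^ 6 + 940 * x ^ 5 - 1738 * x ^ 4 - 3371 * x ^ 3 + 10291 * x ^ 2 -
      3110 * x + 506 > 0 := by
  nlinarith [sq_nonneg x, sq_nonneg (x - 17 / 100), sq_nonneg (x ^ 2), sq_nonneg (x ^ 3),
    mul_pos hx hx, mul_pos (mul_pos hx hx) hx, sq_nonneg (x ^ 2 - 17 / 100 * x),
    sq_nonneg (x ^ 3 - 17 / 100 * x ^ 2)]

theorem P_pos (x : ℝ) (hx : 0 < x) (hx' : x < 23 / 100) :
    (-80 * π ^ 2 + 320 * π - 320) * x ^ 6 +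
      (240 * π ^ 3 - 992 * π ^ 2 + 1088 * π - 128) * x ^ 5 +
      (-260 * π ^ 4 + 1216 * π ^ 3 - 1344 * π ^ 2 - 576 * π + 960) * x ^ 4 +
      (120 * π ^ 5 - 728 * π ^ 4 + 720 * π ^ 3 + 1472 * π ^ 2 - 1920 * π) * x ^ 3 +
      (-20 * π ^ 6 + 212 * π ^ 5 - 132 * π ^ 4 - 1184 * π ^ 3 + 1440 * π ^ 2) * x ^ 2 +
      (-24 * π ^ 6 - 16 * π ^ 5 + 408 * π ^ 4 - 480 * π ^ 3) * x +
      11 * π ^ 6 - 52 * π ^ 5 + 60 * π ^ 4 > 0 := by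
  obtain ⟨c6, c5, c4, c3, c2, c1, c0⟩ := pi_sextic_coeffs_ge
  have hQ := integer_sextic_pos x hx hx'
  linarith [mul_le_mul_of_nonneg_right c6 (by positivity : (0 : ℝ) ≤ x ^ 6),
    mul_le_mul_of_nonneg_right c5 (by positivity : (0 : ℝ) ≤ x ^ 5),
    mul_le_mul_of_nonneg_right c4 (by positivity : (0 : ℝ) ≤ x ^ 4),
    mul_le_mul_of_nonneg_right c3 (by positivity : (0 : ℝ) ≤ x ^ 3),
    mul_le_mul_of_nonneg_right c2 (by positivity : (0 : ℝ) ≤ x ^ 2),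
    mul_le_mul_of_nonneg_right c1 hx.le]
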